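/- Let G be a finite simple graph and let C be a minimum vertex cover of G. Then G is of class two if and only if for any two nonempty independent sets S, T ⊆ C one has |N_{V−C}(S) ∩ N_{V−C}(T)| > |S| + |T|. -/

import Mathlib

/-!
A pair `S, T` of nonempty independent subsets of the minimum cover `C` with
`|N(S) ∩ N(T)| ≤ |S| + |T|` is exactly what a schedule with `Y = C`, `Y₁ = S`, `Y₂ = T` needs:
put `X₃ = N(S) ∩ N(T)`, `X₁ = (V − C) − N(S)` and `X₂ = N(S) − N(T)`.
Conversely, take a schedule for capacity `β(G) = |C|`. If `X` avoids `C`, then counting forces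
`X = V − C`, `Y = C`, and the independence of `X₁ ∪ Y₁` and `X₂ ∪ Y₂` puts
`N(Y₁) ∩ N(Y₂)` inside `X₃`. Otherwise `S = T = X ∩ C` works, because `N(X ∩ C)` lies in
`(V − C) − X`, which is no larger than `X ∩ C` since `|V − C| ≤ |X|`.
-/

open Finset

/-- `C` is a vertex cover of `G`: every edge has an endpoint in `C`. -/
def IsCover {V : Type*} (G : SimpleGraph V) (C : Finset V) : Prop :=
  ∀ ⦃u v : V⦄, G.Adj u v → u ∈ C ∨ v ∈ C

/-- `A` is an independent set of `G`: no two of its vertices are adjacent. -/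
def IsIndep {V : Type*} (G : SimpleGraph V) (A : Finset V) : Prop :=
  ∀ ⦃u : V⦄, u ∈ A → ∀ ⦃v : V⦄, v ∈ A → ¬ G.Adj u v

/-- The vertex cover number β(G): the minimum size of a vertex cover of `G`. -/
noncomputable def coverNumber {V : Type*} [Fintype V] (G : SimpleGraph V) : ℕ :=
  sInf {n : ℕ | ∃ C : Finset V, IsCover G C ∧ C.card = n}

/-- `G` admits a feasible schedule for a boat of capacity `b`, in the sense of the
structure theorem of Csorba, Hurkens and Woeginger. -/
def Feasible {V : Type*} [Fintype V] [DecidableEq V] (G : SimpleGraph V) (b : ℕ) : Prop :=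
  ∃ X₁ X₂ X₃ Y₁ Y₂ : Finset V,
    Disjoint X₁ X₂ ∧ Disjoint X₁ X₃ ∧ Disjoint X₂ X₃ ∧
    IsIndep G (X₁ ∪ X₂ ∪ X₃) ∧
    Y₁.Nonempty ∧ Y₂.Nonempty ∧
    Y₁ ⊆ Finset.univ \ (X₁ ∪ X₂ ∪ X₃) ∧ Y₂ ⊆ Finset.univ \ (X₁ ∪ X₂ ∪ X₃) ∧
    (Finset.univ \ (X₁ ∪ X₂ ∪ X₃)).card ≤ b ∧
    IsIndep G (X₁ ∪ Y₁) ∧ IsIndep G (X₂ ∪ Y₂) ∧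
    X₃.card ≤ Y₁.card + Y₂.card

/-- `G` is of class one if it has a feasible schedule for boat capacity β(G). -/
def ClassOne {V : Type*} [Fintype V] [DecidableEq V] (G : SimpleGraph V) : Prop :=
  Feasible G (coverNumber G)

/-- `G` is of class two if it is not of class one. -/
def ClassTwo {V : Type*} [Fintype V] [DecidableEq V] (G : SimpleGraph V) : Prop :=
  ¬ ClassOne G

/-- `extNbr G C S` is N_{V−C}(S): the set of vertices outside `C` that are adjacent to
at least one vertex of `S`. -/
def extNbr {V : Type*} [Fintype V] [DecidableEq V] (G : SimpleGraph V) [DecidableRel G.Adj]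
    (C S : Finset V) : Finset V :=
  Finset.univ.filter (fun v => v ∉ C ∧ ∃ s ∈ S, G.Adj s v)

section Independence

variable {V : Type*} {G : SimpleGraph V}

lemma IsIndep.mono {A B : Finset V} (h : A ⊆ B) (hB : IsIndep G B) : IsIndep G A :=
  fun _ hu _ hv => hB (h hu) (h hv)

lemma IsIndep.union [DecidableEq V] {A B : Finset V} (hA : IsIndep G A) (hB : IsIndep G B)
    (hAB : ∀ a ∈ A, ∀ b ∈ B, ¬ G.Adj a b) : IsIndep G (A ∪ B) := by
  intro u hu v hv huv
  rcases mem_union.1 hu with hu | hu <;> rcases mem_union.1 hv with hv | hv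
  · exact hA hu hv huv
  · exact hAB u hu v hv huv
  · exact hAB v hv u hu huv.symm
  · exact hB hu hv huv

lemma IsCover.isIndep_compl [Fintype V] [DecidableEq V] {C : Finset V} (hC : IsCover G C) :
    IsIndep G (univ \ C) := by
  intro u hu v hv huv
  rcases hC huv with h | h
  · exact (mem_sdiff.1 hu).2 h
  · exact (mem_sdiff.1 hv).2 h

end Independence

section ExternalNeighbourhood

variable {V : Type*} [Fintype V] [DecidableEq V] {G : SimpleGraph V} [DecidableRel G.Adj]
  {C : Finset V}

lemma mem_extNbr {S : Finset V} {v : V} :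
    v ∈ extNbr G C S ↔ v ∉ C ∧ ∃ s ∈ S, G.Adj s v := by
  simp [extNbr]

lemma extNbr_subset_compl (S : Finset V) : extNbr G C S ⊆ univ \ C :=
  fun _ hv => mem_sdiff.2 ⟨mem_univ _, (mem_extNbr.1 hv).1⟩

lemma IsCover.isIndep_union_of_disjoint_extNbr {A S : Finset V} (hC : IsCover G C)
    (hA : A ⊆ univ \ C) (hAS : Disjoint A (extNbr G C S)) (hS : IsIndep G S) :
    IsIndep G (A ∪ S) :=
  (hC.isIndep_compl.mono hA).union hS fun _ ha s hs has =>
    disjoint_left.1 hAS ha (mem_extNbr.2 ⟨(mem_sdiff.1 (hA ha)).2, s, hs, has.symm⟩)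

def IsClassOnePair (G : SimpleGraph V) [DecidableRel G.Adj] (C S T : Finset V) : Prop :=
  S ⊆ C ∧ T ⊆ C ∧ S.Nonempty ∧ T.Nonempty ∧ IsIndep G S ∧ IsIndep G T ∧
    (extNbr G C S ∩ extNbr G C T).card ≤ S.card + T.card

lemma IsClassOnePair.feasible {S T : Finset V} (hC : IsCover G C)
    (h : IsClassOnePair G C S T) : Feasible G C.card := by
  obtain ⟨hSC, hTC, hS, hT, hSi, hTi, hcard⟩ := h
  set N := extNbr G C S
  set M := extNbr G C T
  have hN : N ⊆ univ \ C := extNbr_subset_compl S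
  have hX : (univ \ C) \ N ∪ N \ M ∪ N ∩ M = univ \ C := by
    rw [union_assoc, sdiff_union_inter, sdiff_union_of_subset hN]
  have hY : univ \ ((univ \ C) \ N ∪ N \ M ∪ N ∩ M) = C := by
    rw [hX, sdiff_sdiff_self_left, univ_inter]
  refine ⟨(univ \ C) \ N, N \ M, N ∩ M, S, T, ?_, ?_, ?_, hX.symm ▸ hC.isIndep_compl, hS, hT,
    hY.symm ▸ hSC, hY.symm ▸ hTC, (congrArg card hY).le, ?_, ?_, hcard⟩
  · exact disjoint_sdiff_self_left.mono_right sdiff_subset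
  · exact disjoint_sdiff_self_left.mono_right inter_subset_left
  · exact disjoint_sdiff_self_left.mono_right inter_subset_right
  · exact hC.isIndep_union_of_disjoint_extNbr sdiff_subset disjoint_sdiff_self_left hSi
  · exact hC.isIndep_union_of_disjoint_extNbr (sdiff_subset.trans hN)
      disjoint_sdiff_self_left hTi

lemma isClassOnePair_inter_self {X : Finset V} (hX : IsIndep G X) (hXC : (X ∩ C).Nonempty)
    (hcard : (univ \ C).card ≤ X.card) : IsClassOnePair G C (X ∩ C) (X ∩ C) := by
  refine ⟨inter_subset_right, inter_subset_right, hXC, hXC, hX.mono inter_subset_left,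
    hX.mono inter_subset_left, ?_⟩
  rw [inter_self, inter_comm X C]
  have hsub : extNbr G C (C ∩ X) ⊆ univ \ (C ∪ X) := fun v hv => by
    obtain ⟨hvC, s, hs, hsv⟩ := mem_extNbr.1 hv
    simp only [mem_sdiff, mem_univ, mem_union, true_and, not_or]
    exact ⟨hvC, fun hvX => hX (mem_inter.1 hs).2 hvX hsv⟩
  have := card_union_add_card_inter C X
  have := card_le_univ (C ∪ X)
  rw [card_univ_sdiff] at hcard
  calc (extNbr G C (C ∩ X)).card ≤ (univ \ (C ∪ X)).card := card_le_card hsub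
    _ = Fintype.card V - (C ∪ X).card := card_univ_sdiff _
    _ ≤ (C ∩ X).card + (C ∩ X).card := by omega

lemma extNbr_inter_extNbr_subset {X₁ X₂ X₃ Y₁ Y₂ : Finset V}
    (hX : univ \ C ⊆ X₁ ∪ X₂ ∪ X₃) (h₁ : IsIndep G (X₁ ∪ Y₁)) (h₂ : IsIndep G (X₂ ∪ Y₂)) :
    extNbr G C Y₁ ∩ extNbr G C Y₂ ⊆ X₃ := by
  intro v hv
  obtain ⟨⟨hvC, s, hs, hsv⟩, -, t, ht, htv⟩ := (mem_inter.1 hv).imp mem_extNbr.1 mem_extNbr.1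
  rcases mem_union.1 (hX (mem_sdiff.2 ⟨mem_univ v, hvC⟩)) with hv | hv
  · rcases mem_union.1 hv with hv | hv
    · exact absurd hsv.symm (h₁ (mem_union_left _ hv) (mem_union_right _ hs))
    · exact absurd htv.symm (h₂ (mem_union_left _ hv) (mem_union_right _ ht))
  · exact hv

lemma exists_isClassOnePair_of_feasible (hf : Feasible G C.card) :
    ∃ S T, IsClassOnePair G C S T := by
  obtain ⟨X₁, X₂, X₃, Y₁, Y₂, -, -, -, hX, hY₁, hY₂, hY₁X, hY₂X, hYcard, h₁, h₂, hX₃⟩ := hf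
  set X := X₁ ∪ X₂ ∪ X₃
  have hXcard : (univ \ C).card ≤ X.card := by
    have := card_le_univ X
    rw [card_univ_sdiff] at hYcard
    rw [card_univ_sdiff]
    omega
  by_cases hXC : (X ∩ C).Nonempty
  · exact ⟨_, _, isClassOnePair_inter_self hX hXC hXcard⟩
  have hXeq : X = univ \ C := eq_of_subset_of_card_le
    (fun v hv => mem_sdiff.2 ⟨mem_univ v, fun hvC => hXC ⟨v, mem_inter.2 ⟨hv, hvC⟩⟩⟩) hXcard
  have hYeq : univ \ X = C := by rw [hXeq, sdiff_sdiff_self_left, univ_inter]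
  refine ⟨Y₁, Y₂, hYeq ▸ hY₁X, hYeq ▸ hY₂X, hY₁, hY₂, h₁.mono subset_union_right,
    h₂.mono subset_union_right, ?_⟩
  exact (card_le_card (extNbr_inter_extNbr_subset hXeq.ge h₁ h₂)).trans hX₃

lemma IsCover.feasible_card_iff (hC : IsCover G C) :
    Feasible G C.card ↔ ∃ S T, IsClassOnePair G C S T :=
  ⟨exists_isClassOnePair_of_feasible, fun ⟨_, _, h⟩ => h.feasible hC⟩

end ExternalNeighbourhood

/-- Classification theorem: for a minimum vertex cover `C` of `G`, the graph `G` is of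
class two iff for any two nonempty independent sets `S, T ⊆ C` one has
`|N_{V−C}(S) ∩ N_{V−C}(T)| > |S| + |T|`. -/
theorem classTwo_iff {V : Type*} [Fintype V] [DecidableEq V]
    (G : SimpleGraph V) [DecidableRel G.Adj] (C : Finset V)
    (hC : IsCover G C) (hmin : C.card = coverNumber G) :
    ClassTwo G ↔
      ∀ S ⊆ C, ∀ T ⊆ C, S.Nonempty → T.Nonempty → IsIndep G S → IsIndep G T →
        S.card + T.card < (extNbr G C S ∩ extNbr G C T).card := by
  rw [ClassTwo, ClassOne, ← hmin, hC.feasible_card_iff]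
  constructor
  · intro h S hS T hT hSne hTne hSi hTi
    exact not_le.1 fun hle => h ⟨S, T, hS, hT, hSne, hTne, hSi, hTi, hle⟩
  · rintro h ⟨S, T, hS, hT, hSne, hTne, hSi, hTi, hle⟩
    exact (h S hS T hT hSne hTne hSi hTi).not_ge hle
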